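/- Let A¹ = (a¹_{ij}) be an admissible matrix field on ℝⁿ with an invariant measure r¹ and a corrector pair (v¹¹, ā¹₁₁) for (k,l) = (1,1). Let φ : ℝⁿ → ℝ be C², ℤⁿ-periodic, with 1 + a¹_{ij}(y) ∂_{y_i}∂_{y_j}φ(y) ≥ 1/2 for all y ∈ ℝⁿ. Define γ := (1 + a¹_{ij} ∂_{y_i}∂_{y_j}φ)^{-1}, a_{ij} := γ a¹_{ij}, r := r¹/γ, and v := v¹¹ + ā¹₁₁ φ. Then: (i) −a_{ij}(y) ∂_{y_i}∂_{y_j} v(y) − a₁₁(y) = −ā¹₁₁ for all y ∈ ℝⁿ (v solves the (1,1)-cell problem for A = (a_{ij}) with the same effective constant ā¹₁₁); (ii) ∂_{y_i}∂_{y_j}(a_{ij}(y) r(y)) = 0 for all y ∈ ℝⁿ; and (iii) ∫_{[0,1]ⁿ} a_{i1}(y) ∂_{y_i} v(y) r(y) dy = ∫_{[0,1]ⁿ} a¹_{i1}(y) ∂_{y_i} v¹¹(y) r¹(y) dy − ā¹₁₁ ∫_{[0,1]ⁿ} (Σ_{i=1}^n ∂_{y_i}(a¹_{i1}(y) r¹(y)))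 φ(y) dy. -/

import Mathlib

open MeasureTheory

/-- The unit cube `[0,1]^n` in `ℝ^n`. -/
def unitCube (n : ℕ) : Set (Fin n → ℝ) := Set.Icc 0 1

/-- Partial derivative `∂_{y_i} f`. -/
noncomputable def pd {n : ℕ} (f : (Fin n → ℝ) → ℝ) (i : Fin n) : (Fin n → ℝ) → ℝ :=
  fun y => fderiv ℝ f y (Pi.single i 1)

/-- Second partial derivative `∂_{y_i} ∂_{y_j} f`. -/
noncomputable def pd2 {n : ℕ} (f : (Fin n → ℝ) → ℝ) (i j : Fin n) : (Fin n → ℝ) → ℝ :=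
  pd (pd f j) i

/-- Third partial derivative `∂_{y_i} ∂_{y_j} ∂_{y_k} f`. -/
noncomputable def pd3 {n : ℕ} (f : (Fin n → ℝ) → ℝ) (i j k : Fin n) : (Fin n → ℝ) → ℝ :=
  pd (pd (pd f k) j) i

/-- `ℤ^n`-periodicity. -/
def ZPeriodic {n : ℕ} (f : (Fin n → ℝ) → ℝ) : Prop :=
  ∀ (y : Fin n → ℝ) (z : Fin n → ℤ), f (y + fun i => (z i : ℝ)) = f y

/-- Admissible matrix field: C², periodic, symmetric, uniformly elliptic. -/
def IsAdmissible {n : ℕ} (a : Fin n → Fin n → (Fin n → ℝ) → ℝ) : Prop :=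
  (∀ i j, ContDiff ℝ 2 (a i j)) ∧
  (∀ i j, ZPeriodic (a i j)) ∧
  (∀ i j y, a i j y = a j i y) ∧
  ∃ lam Lam : ℝ, 0 < lam ∧ lam ≤ Lam ∧
    ∀ (y ξ : Fin n → ℝ),
      lam * (∑ i, ξ i ^ 2) ≤ ∑ i, ∑ j, a i j y * ξ i * ξ j ∧
      ∑ i, ∑ j, a i j y * ξ i * ξ j ≤ Lam * (∑ i, ξ i ^ 2)

/-- Corrector pair `(v^{kl}, ā_{kl})`. -/
def IsCorrector {n : ℕ} (a : Fin n → Fin n → (Fin n → ℝ) → ℝ)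
    (k l : Fin n) (v : (Fin n → ℝ) → ℝ) (abar : ℝ) : Prop :=
  ContDiff ℝ 2 v ∧ ZPeriodic v ∧
  ∀ y, -(∑ i, ∑ j, a i j y * pd2 v i j y) - a k l y = -abar

/-- Invariant measure for the matrix field `a`. -/
def IsInvariantMeasure {n : ℕ} (a : Fin n → Fin n → (Fin n → ℝ) → ℝ)
    (r : (Fin n → ℝ) → ℝ) : Prop :=
  ContDiff ℝ 2 r ∧ ZPeriodic r ∧ (∀ y, 0 < r y) ∧
  (∀ y, ∑ i, ∑ j, pd2 (fun x => a i j x * r x) i j y = 0) ∧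
  ∫ y in unitCube n, r y = 1

/-- `u` is Cᵐ on a neighborhood of the closure of `U`, with all partial
derivatives up to order `m` bounded there. -/
def SmoothBounded {n : ℕ} (m : ℕ) (U : Set (Fin n → ℝ)) (u : (Fin n → ℝ) → ℝ) : Prop :=
  ∃ V : Set (Fin n → ℝ), IsOpen V ∧ closure U ⊆ V ∧ ContDiffOn ℝ m u V ∧
    ∀ k : ℕ, k ≤ m → ∃ M : ℝ, ∀ x ∈ V, ‖iteratedFDerivWithin ℝ k u V x‖ ≤ M

/-!
The conformal factor cancels in the fluxes: `aᵢⱼ r = a¹ᵢⱼ r¹` pointwise, so `r` inherits the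
invariance equation of `r¹`. The cell equation for `v = v¹¹ + ā¹₁₁ φ` is linear algebra once one
multiplies the cell equation of `v¹¹` by `γ` and uses `γ (1 + a¹ᵢⱼ ∂ᵢ∂ⱼφ) = 1`. In the effective
coefficient the extra term `ā¹₁₁ ∫ a¹ᵢ₁ r¹ ∂ᵢφ` is integrated by parts; the boundary terms vanish
because the flux of a periodic field through opposite faces of the unit cube cancels.
-/

section PartialDerivatives

variable {n : ℕ} {f g : (Fin n → ℝ) → ℝ} {i j : Fin n} {y : Fin n → ℝ}

theorem ContDiff.contDiff_pd {k m : WithTop ℕ∞} (hf : ContDiff ℝ k f) (hmk : m + 1 ≤ k)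
    (i : Fin n) : ContDiff ℝ m (pd f i) :=
  (hf.fderiv_right hmk).clm_apply contDiff_const

theorem ContDiff.continuous_pd (hf : ContDiff ℝ 1 f) (i : Fin n) : Continuous (pd f i) :=
  (hf.contDiff_pd (m := 0) le_rfl i).continuous

theorem pd_add_const_mul (hf : DifferentiableAt ℝ f y) (hg : DifferentiableAt ℝ g y) (c : ℝ) :
    pd (fun x => f x + c * g x) i y = pd f i y + c * pd g i y := by
  simp [pd, fderiv_fun_add hf (hg.const_mul c), fderiv_const_mul hg]

theorem pd_mul (hf : DifferentiableAt ℝ f y) (hg : DifferentiableAt ℝ g y) :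
    pd (fun x => f x * g x) i y = pd f i y * g y + f y * pd g i y := by
  simp only [pd, fderiv_fun_mul hf hg, add_apply, smul_apply, smul_eq_mul]
  ring

theorem pd2_add_const_mul (hf : ContDiff ℝ 2 f) (hg : ContDiff ℝ 2 g) (c : ℝ) :
    pd2 (fun x => f x + c * g x) i j y = pd2 f i j y + c * pd2 g i j y := by
  have hpd : pd (fun x => f x + c * g x) j = fun x => pd f j x + c * pd g j x :=
    funext fun x => pd_add_const_mul (hf.differentiable two_ne_zero x)
      (hg.differentiable two_ne_zero x) c
  rw [pd2, hpd]
  exact pd_add_const_mul ((hf.contDiff_pd (by norm_num) j).differentiable one_ne_zero y)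
    ((hg.contDiff_pd (by norm_num) j).differentiable one_ne_zero y) c

theorem cell_equation_conformal {a1 : Fin n → Fin n → (Fin n → ℝ) → ℝ} {u φ : (Fin n → ℝ) → ℝ}
    {c γ : ℝ} {k l : Fin n} (hu : ContDiff ℝ 2 u) (hφ : ContDiff ℝ 2 φ)
    (hcell : -(∑ i, ∑ j, a1 i j y * pd2 u i j y) - a1 k l y = -c)
    (hγ : γ * (1 + ∑ i, ∑ j, a1 i j y * pd2 φ i j y) = 1) :
    -(∑ i, ∑ j, γ * a1 i j y * pd2 (fun x => u x + c * φ x) i j y) - γ * a1 k l y = -c := by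
  have hsum : ∑ i, ∑ j, γ * a1 i j y * pd2 (fun x => u x + c * φ x) i j y =
      γ * ((∑ i, ∑ j, a1 i j y * pd2 u i j y) + c * ∑ i, ∑ j, a1 i j y * pd2 φ i j y) := by
    simp only [pd2_add_const_mul hu hφ, mul_add, Finset.mul_sum, ← Finset.sum_add_distrib]
    exact Finset.sum_congr rfl fun i _ => Finset.sum_congr rfl fun j _ => by ring
  rw [hsum]
  linear_combination γ * hcell - c * hγ

end PartialDerivatives

section Periodic

variable {n : ℕ} {f g : (Fin n → ℝ) → ℝ}

theorem ZPeriodic.mul (hf : ZPeriodic f) (hg : ZPeriodic g) : ZPeriodic fun x => f x * g x :=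
  fun y z => by simp only [hf y z, hg y z]

theorem ZPeriodic.apply_add_single (hf : ZPeriodic f) (y : Fin n → ℝ) (i : Fin n) :
    f (y + Pi.single i 1) = f y := by
  convert hf y (Pi.single i 1) using 3
  funext j
  by_cases hj : j = i
  · subst hj; simp
  · simp [Pi.single_eq_of_ne hj]

theorem Continuous.integrableOn_unitCube (hf : Continuous f) : IntegrableOn f (unitCube n) :=
  hf.integrableOn_Icc

theorem integral_unitCube_sum_pd_eq_zero {F : Fin n → (Fin n → ℝ) → ℝ}
    (hF : ∀ i, ContDiff ℝ 1 (F i)) (hFper : ∀ i, ZPeriodic (F i)) :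
    ∫ y in unitCube n, ∑ i, pd (F i) i y = 0 := by
  cases n with
  | zero => simp
  | succ m =>
    have hint : IntegrableOn (fun x => ∑ i, fderiv ℝ (F i) x (Pi.single i 1)) (unitCube (m + 1)) :=
      (continuous_finsetSum _ fun i _ => (hF i).continuous_pd i).integrableOn_unitCube
    refine (integral_divergence_of_hasFDerivAt_off_countable' 0 1 zero_le_one F
      (fun i x => fderiv ℝ (F i) x) ∅ Set.countable_empty (fun i => (hF i).continuous.continuousOn)
      (fun x _ i => ((hF i).differentiable one_ne_zero x).hasFDerivAt) hint).trans
      (Finset.sum_eq_zero fun i _ => sub_eq_zero.mpr ?_)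
    congr 1 with x
    simpa [← Fin.insertNth_zero_right, ← Fin.insertNth_add] using
      (hFper i).apply_add_single (i.insertNth 0 x) i

theorem integral_unitCube_sum_mul_pd {F : Fin n → (Fin n → ℝ) → ℝ} {φ : (Fin n → ℝ) → ℝ}
    (hF : ∀ i, ContDiff ℝ 1 (F i)) (hFper : ∀ i, ZPeriodic (F i))
    (hφ : ContDiff ℝ 1 φ) (hφper : ZPeriodic φ) :
    ∫ y in unitCube n, ∑ i, F i y * pd φ i y =
      -∫ y in unitCube n, (∑ i, pd (F i) i y) * φ y := by
  have hpdF : ∀ i, Continuous (pd (F i) i) := fun i => (hF i).continuous_pd i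
  have hpdφ : ∀ i, Continuous (pd φ i) := hφ.continuous_pd
  have hdiv := integral_unitCube_sum_pd_eq_zero (F := fun i x => F i x * φ x)
    (fun i => (hF i).mul hφ) (fun i => (hFper i).mul hφper)
  simp only [fun i y => pd_mul (i := i) (y := y) ((hF i).differentiable one_ne_zero y)
    (hφ.differentiable one_ne_zero y), Finset.sum_add_distrib, ← Finset.sum_mul] at hdiv
  rw [integral_add (Continuous.integrableOn_unitCube (by fun_prop))
    (Continuous.integrableOn_unitCube (by fun_prop))] at hdiv
  linarith

theorem integral_unitCube_sum_mul_pd_add_const_mul {F : Fin n → (Fin n → ℝ) → ℝ}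
    {u φ : (Fin n → ℝ) → ℝ} (hF : ∀ i, ContDiff ℝ 1 (F i)) (hFper : ∀ i, ZPeriodic (F i))
    (hu : ContDiff ℝ 1 u) (hφ : ContDiff ℝ 1 φ) (hφper : ZPeriodic φ) (c : ℝ) :
    ∫ y in unitCube n, ∑ i, F i y * pd (fun x => u x + c * φ x) i y =
      (∫ y in unitCube n, ∑ i, F i y * pd u i y) -
        c * ∫ y in unitCube n, (∑ i, pd (F i) i y) * φ y := by
  have hpdu : ∀ i, Continuous (pd u i) := hu.continuous_pd
  have hpdφ : ∀ i, Continuous (pd φ i) := hφ.continuous_pd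
  simp only [fun i y => pd_add_const_mul (i := i) (hu.differentiable one_ne_zero y)
    (hφ.differentiable one_ne_zero y) c, mul_add, Finset.sum_add_distrib, mul_left_comm _ c,
    ← Finset.mul_sum]
  rw [integral_add (Continuous.integrableOn_unitCube (by fun_prop))
    (Continuous.integrableOn_unitCube (by fun_prop)), integral_const_mul,
    integral_unitCube_sum_mul_pd hF hFper hφ hφper]
  ring

end Periodic

theorem conformal_perturbation_general {n : ℕ}
    (i0 : Fin n)
    (a1 : Fin n → Fin n → (Fin n → ℝ) → ℝ) (hA1 : IsAdmissible a1)
    (r1 : (Fin n → ℝ) → ℝ) (hr1 : IsInvariantMeasure a1 r1)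
    (v11 : (Fin n → ℝ) → ℝ) (abar11 : ℝ) (hcorr : IsCorrector a1 i0 i0 v11 abar11)
    (φ : (Fin n → ℝ) → ℝ) (hφC : ContDiff ℝ 2 φ) (hφper : ZPeriodic φ)
    (hφbd : ∀ y, 1 / 2 ≤ 1 + ∑ i, ∑ j, a1 i j y * pd2 φ i j y)
    (γ : (Fin n → ℝ) → ℝ)
    (hγ : ∀ y, γ y = (1 + ∑ i, ∑ j, a1 i j y * pd2 φ i j y)⁻¹)
    (a : Fin n → Fin n → (Fin n → ℝ) → ℝ)
    (ha : ∀ i j y, a i j y = γ y * a1 i j y)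
    (r : (Fin n → ℝ) → ℝ) (hrdef : ∀ y, r y = r1 y / γ y)
    (v : (Fin n → ℝ) → ℝ) (hvdef : ∀ y, v y = v11 y + abar11 * φ y) :
    (∀ y, -(∑ i, ∑ j, a i j y * pd2 v i j y) - a i0 i0 y = -abar11) ∧
    (∀ y, ∑ i, ∑ j, pd2 (fun x => a i j x * r x) i j y = 0) ∧
    ((∫ y in unitCube n, (∑ i, a i i0 y * pd v i y) * r y)
      = (∫ y in unitCube n, (∑ i, a1 i i0 y * pd v11 i y) * r1 y)
        - abar11 * ∫ y in unitCube n,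
            (∑ i, pd (fun x => a1 i i0 x * r1 x) i y) * φ y) := by
  have hS : ∀ y, 1 + ∑ i, ∑ j, a1 i j y * pd2 φ i j y ≠ 0 := fun y => by linarith [hφbd y]
  have har : ∀ i j y, a i j y * r y = a1 i j y * r1 y := fun i j y => by
    rw [ha, hrdef, hγ]; field_simp [hS y]
  obtain rfl : v = fun y => v11 y + abar11 * φ y := funext hvdef
  refine ⟨fun y => ?_, fun y => by simpa only [har] using hr1.2.2.2.1 y, ?_⟩
  · simp only [ha]
    exact cell_equation_conformal hcorr.1 hφC (hcorr.2.2 y)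
      (by rw [hγ]; exact inv_mul_cancel₀ (hS y))
  · simp only [Finset.sum_mul _ _ (r _), Finset.sum_mul _ _ (r1 _), mul_right_comm _ (pd _ _ _),
      har]
    exact integral_unitCube_sum_mul_pd_add_const_mul
      (fun i => ((hA1.1 i i0).mul hr1.1).of_le one_le_two) (fun i => (hA1.2.1 i i0).mul hr1.2.1)
      (hcorr.1.of_le one_le_two) (hφC.of_le one_le_two) hφper abar11

/-- Step 2 of the density proof: conformal perturbation
identity. With `γ = (1 + a¹_{ij}∂_i∂_jφ)⁻¹`, `a = γ a¹`, `r = r¹/γ`,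
`v = v¹¹ + ā¹₁₁ φ`, the function `v` solves the `(1,1)`-cell problem for `a`,
`r` satisfies the invariant-measure equation, and `c^{11}_1` transforms by the
stated formula. -/
theorem conformal_perturbation {n : ℕ}
    (i0 : Fin n) (hi0 : (i0 : ℕ) = 0)
    (a1 : Fin n → Fin n → (Fin n → ℝ) → ℝ) (hA1 : IsAdmissible a1)
    (r1 : (Fin n → ℝ) → ℝ) (hr1 : IsInvariantMeasure a1 r1)
    (v11 : (Fin n → ℝ) → ℝ) (abar11 : ℝ) (hcorr : IsCorrector a1 i0 i0 v11 abar11)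
    (φ : (Fin n → ℝ) → ℝ) (hφC : ContDiff ℝ 2 φ) (hφper : ZPeriodic φ)
    (hφbd : ∀ y, 1 / 2 ≤ 1 + ∑ i, ∑ j, a1 i j y * pd2 φ i j y)
    (γ : (Fin n → ℝ) → ℝ)
    (hγ : ∀ y, γ y = (1 + ∑ i, ∑ j, a1 i j y * pd2 φ i j y)⁻¹)
    (a : Fin n → Fin n → (Fin n → ℝ) → ℝ)
    (ha : ∀ i j y, a i j y = γ y * a1 i j y)
    (r : (Fin n → ℝ) → ℝ) (hrdef : ∀ y, r y = r1 y / γ y)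
    (v : (Fin n → ℝ) → ℝ) (hvdef : ∀ y, v y = v11 y + abar11 * φ y) :
    (∀ y, -(∑ i, ∑ j, a i j y * pd2 v i j y) - a i0 i0 y = -abar11) ∧
    (∀ y, ∑ i, ∑ j, pd2 (fun x => a i j x * r x) i j y = 0) ∧
    ((∫ y in unitCube n, (∑ i, a i i0 y * pd v i y) * r y)
      = (∫ y in unitCube n, (∑ i, a1 i i0 y * pd v11 i y) * r1 y)
        - abar11 * ∫ y in unitCube n,
            (∑ i, pd (fun x => a1 i i0 x * r1 x) i y) * φ y) :=
  conformal_perturbation_general i0 a1 hA1 r1 hr1 v11 abar11 hcorr φ hφC hφper hφbd γ hγ a ha r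
    hrdef v hvdef
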